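/- Let y be the vector with entries y_h = ρ^{−(h_1+⋯+h_k)} and Δ_y the diagonal matrix with diagonal entries y_h. Then Δ_y^{−1} A_*(ρ^{−k}) Δ_y is a stochastic matrix on H, and the Markov chain on H with this transition matrix is positive recurrent; in particular there exists a stationary probability distribution ν on H with ν Δ_y^{−1} A_*(ρ^{−k}) Δ_y = ν. -/

import Mathlib

open Filter Topology

noncomputable section

/-- Traffic intensity ρ = λ / Σ μᵢ. -/
def rho (k : ℕ) (lam : ℝ) (μ : Fin k → ℝ) : ℝ := lam / ∑ i, μ i

/-- `S(h) = {i ∈ J : h_i = 0}`, the set of coordinates where `h` vanishes. -/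
def sZero (k : ℕ) (h : Fin k → ℕ) : Finset (Fin k) :=
  Finset.univ.filter (fun i => h i = 0)

/-- The QBD block `A_{+1}`: `[A_{+1}]_{h, h−𝟙+e_i} = λ` when `|S(h)| = 1` and `i ∈ S(h)`. -/
def Aplus (k : ℕ) (lam : ℝ) (h h' : Fin k → ℕ) : ℝ :=
  if (sZero k h).card = 1 ∧ h' = fun j => h j - 1 then lam else 0

/-- The QBD block `A_0`: `[A_0]_{h, h+e_i} = λ/|S(h)|` when `|S(h)| ≥ 2`, `i ∈ S(h)`, and
`[A_0]_{h, h−e_j} = μ_j` for `j ∉ S(h)`. -/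
def Azero (k : ℕ) (lam : ℝ) (μ : Fin k → ℝ) (h h' : Fin k → ℕ) : ℝ :=
  (if 2 ≤ (sZero k h).card then
      ∑ i ∈ sZero k h,
        (if h' = Function.update h i 1 then lam / (sZero k h).card else 0)
    else 0)
  + ∑ j ∈ (sZero k h)ᶜ, (if h' = Function.update h j (h j - 1) then μ j else 0)

/-- The QBD block `A_{−1}`: `[A_{−1}]_{h, h+𝟙−e_i} = μ_i` for `i ∈ S(h)`. -/
def Aminus (k : ℕ) (μ : Fin k → ℝ) (h h' : Fin k → ℕ) : ℝ :=
  ∑ i ∈ sZero k h, (if h' = (fun j => if j = i then 0 else h j + 1) then μ i else 0)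

/-- `A_*(z) = z⁻¹ A_{−1} + A_0 + z A_{+1}`. -/
def Astar (k : ℕ) (lam : ℝ) (μ : Fin k → ℝ) (z : ℝ) (h h' : Fin k → ℕ) : ℝ :=
  z⁻¹ * Aminus k μ h h' + Azero k lam μ h h' + z * Aplus k lam h h'

end

noncomputable section

/-- The similarity transform `Δ_y⁻¹ A_*(ρ^{−k}) Δ_y` with `y_h = ρ^{−Σᵢ h_i}`. -/
def pMat (k : ℕ) (lam : ℝ) (μ : Fin k → ℝ) (h h' : Fin k → ℕ) : ℝ :=
  rho k lam μ ^ (∑ i, h i) * Astar k lam μ ((rho k lam μ ^ k)⁻¹) h h'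
    * (rho k lam μ ^ (∑ i, h' i))⁻¹

end

/-!
Conjugation by `Δ_y` multiplies each transition of `A_*(ρ^{-k})` by a power of `ρ`: every
departure from queue `i` gets rate `ρ μ_i` and the arrivals get total rate `λ / ρ = Σ μ_i`, so every
row sums to `ρ Σ μ_i + Σ μ_i = λ + Σ μ_i = 1`. Positive recurrence follows from Foster's criterion
with the Lyapunov function `V h = k · max h - Σ h`: a departure raises `V` by at most `1` and an
arrival lowers it by exactly `1`, so away from `0` the drift is at most `λ - Σ μ_i < 0`. The
stationary distribution is the normalised expected occupation measure of an excursion from `0`,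
whose total mass, the mean return time, is finite by the drift bound.
-/

open scoped ENNReal

namespace ENNReal

lemma tsum_le_of_add_le {a b : ℕ → ℝ≥0∞} (h : ∀ n, a (n + 1) + b n ≤ a n) :
    ∑' n, b n ≤ a 0 := by
  have partial_le : ∀ N, ∑ n ∈ Finset.range N, b n + a N ≤ a 0 := by
    intro N
    induction N with
    | zero => simp
    | succ N ih =>
      calc ∑ n ∈ Finset.range (N + 1), b n + a (N + 1)
          = ∑ n ∈ Finset.range N, b n + (a (N + 1) + b N) := by
            rw [Finset.sum_range_succ, add_assoc, add_comm (b N)]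
        _ ≤ ∑ n ∈ Finset.range N, b n + a N := by gcongr; exact h N
        _ ≤ a 0 := ih
  exact tsum_le_of_sum_range_le fun N => le_self_add.trans (partial_le N)

lemma tsum_eq_of_add_eq {a b : ℕ → ℝ≥0∞} (h : ∀ n, a (n + 1) + b n = a n)
    (ha : Tendsto a atTop (𝓝 0)) : ∑' n, b n = a 0 := by
  have partial_eq : ∀ N, ∑ n ∈ Finset.range N, b n + a N = a 0 := by
    intro N
    induction N with
    | zero => simp
    | succ N ih => rw [Finset.sum_range_succ, add_assoc, add_comm (b N), h, ih]
  have hlim := (tendsto_nat_tsum b).add ha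
  rw [add_zero] at hlim
  exact tendsto_nhds_unique hlim (by simp only [partial_eq]; exact tendsto_const_nhds)

end ENNReal

section TabooMass

variable {σ : Type*} [DecidableEq σ] (P : σ → σ → ℝ≥0∞) (o : σ)

/-- `tabooMass P o n y` is the probability that the chain with kernel `P` started at `o` is at `y`
at time `n` without having visited `o` at the times `1, …, n`. -/
noncomputable def tabooMass : ℕ → σ → ℝ≥0∞
  | 0 => fun y => if y = o then 1 else 0
  | n + 1 => fun y => if y = o then 0 else ∑' x, tabooMass n x * P x y

variable {P o}

lemma tabooMass_succ_self (n : ℕ) : tabooMass P o (n + 1) o = 0 := if_pos rfl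

lemma tsum_tabooMass_zero : ∑' y, tabooMass P o 0 y = 1 := by
  simp [tabooMass]

lemma tsum_tabooMass_mul (n : ℕ) (y : σ) :
    ∑' x, tabooMass P o n x * P x y =
      tabooMass P o (n + 1) y + if y = o then ∑' x, tabooMass P o n x * P x o else 0 := by
  by_cases hy : y = o
  · subst hy; simp [tabooMass]
  · simp [tabooMass, hy]

lemma tabooMass_succ_le (n : ℕ) (y : σ) :
    tabooMass P o (n + 1) y ≤ ∑' x, tabooMass P o n x * P x y := by
  rw [tsum_tabooMass_mul]; exact le_self_add

lemma tabooMass_one_le (y : σ) : tabooMass P o 1 y ≤ P o y := by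
  simpa [tabooMass] using tabooMass_succ_le (P := P) (o := o) 0 y

variable {S : Set σ}

lemma mem_of_tabooMass_ne_zero (ho : o ∈ S) (hclosed : ∀ x ∈ S, ∀ y, P x y ≠ 0 → y ∈ S) :
    ∀ n y, tabooMass P o n y ≠ 0 → y ∈ S
  | 0, y, hy => by
    by_cases h : y = o
    · exact h ▸ ho
    · simp [tabooMass, h] at hy
  | n + 1, y, hy => by
    obtain ⟨x, hx⟩ : ∃ x, tabooMass P o n x * P x y ≠ 0 := by
      by_contra! h
      exact hy (le_antisymm ((tabooMass_succ_le n y).trans (by simp [h])) bot_le)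
    exact hclosed x (mem_of_tabooMass_ne_zero ho hclosed n x (left_ne_zero_of_mul hx)) y
      (right_ne_zero_of_mul hx)

end TabooMass

section FosterLyapunov

variable {σ : Type*} [DecidableEq σ] {P : σ → σ → ℝ≥0∞} {o : σ} {S : Set σ}
  {V : σ → ℝ≥0∞} {ε : ℝ≥0∞}

lemma tsum_tabooMass_succ_add_return (ho : o ∈ S) (hrow : ∀ x ∈ S, ∑' y, P x y = 1)
    (hclosed : ∀ x ∈ S, ∀ y, P x y ≠ 0 → y ∈ S) (n : ℕ) :
    ∑' y, tabooMass P o (n + 1) y + ∑' x, tabooMass P o n x * P x o =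
      ∑' x, tabooMass P o n x := by
  calc _ = ∑' y, ∑' x, tabooMass P o n x * P x y := by
        rw [tsum_congr fun y => tsum_tabooMass_mul n y, ENNReal.tsum_add, tsum_ite_eq]
    _ = ∑' x, tabooMass P o n x * ∑' y, P x y := by
        rw [ENNReal.tsum_comm]; simp_rw [ENNReal.tsum_mul_left]
    _ = _ := tsum_congr fun x => by
        by_cases hx : tabooMass P o n x = 0
        · simp [hx]
        · rw [hrow x (mem_of_tabooMass_ne_zero ho hclosed n x hx), mul_one]

lemma tsum_tabooMass_drift (ho : o ∈ S) (hclosed : ∀ x ∈ S, ∀ y, P x y ≠ 0 → y ∈ S)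
    (hdrift : ∀ x ∈ S, x ≠ o → ∑' y, P x y * V y + ε ≤ V x) (n : ℕ) :
    ∑' y, tabooMass P o (n + 2) y * V y + ε * ∑' x, tabooMass P o (n + 1) x ≤
      ∑' x, tabooMass P o (n + 1) x * V x := by
  have hstep : ∑' y, tabooMass P o (n + 2) y * V y ≤
      ∑' x, tabooMass P o (n + 1) x * ∑' y, P x y * V y :=
    calc _ ≤ ∑' y, (∑' x, tabooMass P o (n + 1) x * P x y) * V y := by
          gcongr with y; exact tabooMass_succ_le _ _
      _ = _ := by
          simp_rw [← ENNReal.tsum_mul_right, mul_assoc, ← ENNReal.tsum_mul_left]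
          exact ENNReal.tsum_comm
  calc _ ≤ ∑' x, tabooMass P o (n + 1) x * ∑' y, P x y * V y +
        ∑' x, tabooMass P o (n + 1) x * ε := by
        rw [ENNReal.tsum_mul_right, mul_comm ε]
        exact add_le_add_left hstep _
    _ = ∑' x, tabooMass P o (n + 1) x * (∑' y, P x y * V y + ε) := by
        rw [← ENNReal.tsum_add]; simp_rw [mul_add]
    _ ≤ _ := ENNReal.tsum_le_tsum fun x => by
        by_cases hx : tabooMass P o (n + 1) x = 0
        · simp [hx]
        · gcongr
          refine hdrift x (mem_of_tabooMass_ne_zero ho hclosed _ x hx) ?_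
          rintro rfl
          exact hx (tabooMass_succ_self n)

/-- Positive recurrence: the expected return time to `o` is finite. -/
lemma tsum_tsum_tabooMass_ne_top (ho : o ∈ S) (hclosed : ∀ x ∈ S, ∀ y, P x y ≠ 0 → y ∈ S)
    (hε : ε ≠ 0) (hV : ∑' y, P o y * V y ≠ ⊤)
    (hdrift : ∀ x ∈ S, x ≠ o → ∑' y, P x y * V y + ε ≤ V x) :
    ∑' n, ∑' y, tabooMass P o (n + 1) y ≠ ⊤ := by
  have hle : ε * ∑' n, ∑' y, tabooMass P o (n + 1) y ≤ ∑' y, P o y * V y :=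
    calc _ = ∑' n, ε * ∑' y, tabooMass P o (n + 1) y := ENNReal.tsum_mul_left.symm
      _ ≤ ∑' y, tabooMass P o 1 y * V y :=
        ENNReal.tsum_le_of_add_le (a := fun n => ∑' y, tabooMass P o (n + 1) y * V y)
          (tsum_tabooMass_drift ho hclosed hdrift)
      _ ≤ _ := by gcongr with y; exact tabooMass_one_le y
  intro htop
  rw [htop, ENNReal.mul_top hε, top_le_iff] at hle
  exact hV hle

lemma tsum_return_eq_one (ho : o ∈ S) (hrow : ∀ x ∈ S, ∑' y, P x y = 1)
    (hclosed : ∀ x ∈ S, ∀ y, P x y ≠ 0 → y ∈ S)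
    (hfin : ∑' n, ∑' y, tabooMass P o (n + 1) y ≠ ⊤) :
    ∑' n, ∑' x, tabooMass P o n x * P x o = 1 := by
  rw [← tsum_tabooMass_zero (P := P) (o := o)]
  refine ENNReal.tsum_eq_of_add_eq (a := fun n => ∑' y, tabooMass P o n y)
    (tsum_tabooMass_succ_add_return ho hrow hclosed) ?_
  exact (tendsto_add_atTop_iff_nat 1).mp (ENNReal.tendsto_atTop_zero_of_tsum_ne_top hfin)

lemma tsum_occupation_mul (hret : ∑' n, ∑' x, tabooMass P o n x * P x o = 1) (y : σ) :
    ∑' x, (∑' n, tabooMass P o n x) * P x y = ∑' n, tabooMass P o n y := by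
  calc _ = ∑' n, ∑' x, tabooMass P o n x * P x y := by
        simp_rw [← ENNReal.tsum_mul_right]; exact ENNReal.tsum_comm
    _ = ∑' n, tabooMass P o (n + 1) y + tabooMass P o 0 y := by
        rw [tsum_congr fun n => tsum_tabooMass_mul n y, ENNReal.tsum_add]
        by_cases hy : y = o <;> simp [hy, hret, tabooMass]
    _ = _ := by
        rw [add_comm]
        exact (tsum_eq_zero_add' (f := fun n => tabooMass P o n y) ENNReal.summable).symm

theorem ENNReal.exists_stationary_of_drift (ho : o ∈ S) (hrow : ∀ x ∈ S, ∑' y, P x y = 1)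
    (hclosed : ∀ x ∈ S, ∀ y, P x y ≠ 0 → y ∈ S) (hε : ε ≠ 0) (hV : ∑' y, P o y * V y ≠ ⊤)
    (hdrift : ∀ x ∈ S, x ≠ o → ∑' y, P x y * V y + ε ≤ V x) :
    ∃ ν : σ → ℝ≥0∞, (∀ y, ν y ≠ 0 → y ∈ S) ∧ (∀ y, ∑' x, ν x * P x y = ν y) ∧
      ∑' y, ν y = 1 := by
  have hfin := tsum_tsum_tabooMass_ne_top ho hclosed hε hV hdrift
  have hret := tsum_return_eq_one ho hrow hclosed hfin
  set m : σ → ℝ≥0∞ := fun y => ∑' n, tabooMass P o n y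
  set Z := ∑' y, m y
  have hZ : Z = 1 + ∑' n, ∑' y, tabooMass P o (n + 1) y :=
    calc Z = ∑' n, ∑' y, tabooMass P o n y := ENNReal.tsum_comm
      _ = _ := by rw [tsum_eq_zero_add' ENNReal.summable, tsum_tabooMass_zero]
  have hZ0 : Z ≠ 0 := by simp [hZ]
  have hZtop : Z ≠ ⊤ := by simp [hZ, hfin]
  refine ⟨fun y => m y / Z, fun y hy => ?_, fun y => ?_, ?_⟩
  · obtain ⟨n, hn⟩ : ∃ n, tabooMass P o n y ≠ 0 := by
      by_contra! h
      simp [m, h] at hy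
    exact mem_of_tabooMass_ne_zero ho hclosed n y hn
  · simp_rw [div_eq_mul_inv, mul_right_comm _ Z⁻¹, ENNReal.tsum_mul_right]
    exact congrArg (· * Z⁻¹) (tsum_occupation_mul hret y)
  · simp_rw [div_eq_mul_inv, ENNReal.tsum_mul_right]
    exact ENNReal.mul_inv_cancel hZ0 hZtop

theorem exists_stationary_of_drift {P : σ → σ → ℝ} {V PV : σ → ℝ} {ε : ℝ}
    (hP : ∀ x y, 0 ≤ P x y) (hV : ∀ x, 0 ≤ V x) (hε : 0 < ε) (ho : o ∈ S)
    (hrow : ∀ x ∈ S, HasSum (P x) 1) (hclosed : ∀ x ∈ S, ∀ y, P x y ≠ 0 → y ∈ S)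
    (hmean : ∀ x ∈ S, HasSum (fun y => P x y * V y) (PV x))
    (hdrift : ∀ x ∈ S, x ≠ o → PV x + ε ≤ V x) :
    ∃ ν : σ → ℝ, (∀ x, 0 ≤ ν x) ∧ (∀ x, ν x ≠ 0 → x ∈ S) ∧ HasSum ν 1 ∧
      ∀ y, ∑' x, ν x * P x y = ν y := by
  have hmean' : ∀ x ∈ S,
      ∑' y, ENNReal.ofReal (P x y) * ENNReal.ofReal (V y) = ENNReal.ofReal (PV x) := by
    intro x hx
    rw [← (hmean x hx).tsum_eq, ENNReal.ofReal_tsum_of_nonneg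
      (fun y => mul_nonneg (hP x y) (hV y)) (hmean x hx).summable]
    simp_rw [ENNReal.ofReal_mul (hP x _)]
  obtain ⟨ν, hsupp, hstat, hsum⟩ := ENNReal.exists_stationary_of_drift
    (P := fun x y => ENNReal.ofReal (P x y)) (V := fun y => ENNReal.ofReal (V y)) ho
    (fun x hx => by
      rw [← ENNReal.ofReal_tsum_of_nonneg (hP x) (hrow x hx).summable, (hrow x hx).tsum_eq,
        ENNReal.ofReal_one])
    (fun x hx y hxy => hclosed x hx y fun h => hxy (by simp [h]))
    (ENNReal.ofReal_pos.2 hε).ne' (by rw [hmean' o ho]; exact ENNReal.ofReal_ne_top)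
    (fun x hx hxo => by
      rw [hmean' x hx, ← ENNReal.ofReal_add
        ((hmean x hx).nonneg fun y => mul_nonneg (hP x y) (hV y)) hε.le]
      exact ENNReal.ofReal_le_ofReal (hdrift x hx hxo))
  have hfin : ∀ x, ν x ≠ ⊤ := fun x =>
    ne_top_of_le_ne_top (hsum ▸ ENNReal.one_ne_top) (ENNReal.le_tsum x)
  refine ⟨fun x => (ν x).toReal, fun _ => ENNReal.toReal_nonneg,
    fun x hx => hsupp x fun h => hx (by simp [h]), ?_, fun y => ?_⟩
  · have h := ENNReal.hasSum_toReal (f := ν) (by simp [hsum])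
    rwa [← ENNReal.tsum_toReal_eq hfin, hsum, ENNReal.toReal_one] at h
  · calc ∑' x, (ν x).toReal * P x y = ∑' x, (ν x * ENNReal.ofReal (P x y)).toReal := by
          simp [ENNReal.toReal_mul, ENNReal.toReal_ofReal (hP _ y)]
      _ = (ν y).toReal := by
          rw [← ENNReal.tsum_toReal_eq fun x => ENNReal.mul_ne_top (hfin x) ENNReal.ofReal_ne_top,
            hstat y]

end FosterLyapunov

section JSQ

open Finset

variable {k : ℕ}

-- The targets `h + 𝟙 - e_i` (`i ∈ S(h)`) of `A_{-1}` and `h - 𝟙` of `A_{+1}`: they lower and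
-- raise the level, i.e. the length of the shortest queue.
def levelDown (h : Fin k → ℕ) (i : Fin k) : Fin k → ℕ := fun j => if j = i then 0 else h j + 1

def levelUp (h : Fin k → ℕ) : Fin k → ℕ := fun j => h j - 1

lemma mem_sZero {h : Fin k → ℕ} {i : Fin k} : i ∈ sZero k h ↔ h i = 0 := by
  simp [sZero]

lemma exists_of_card_sZero_eq_one {h : Fin k → ℕ} (h1 : #(sZero k h) = 1) :
    ∃ i, h i = 0 ∧ ∀ j, j ≠ i → h j ≠ 0 := by
  obtain ⟨i, hS⟩ := card_eq_one.1 h1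
  exact ⟨i, mem_sZero.1 (hS ▸ mem_singleton_self i),
    fun j hj h0 => hj (mem_singleton.1 (hS ▸ mem_sZero.2 h0))⟩

section Sums

variable {h : Fin k → ℕ} {i : Fin k}

lemma sum_levelDown (hi : h i = 0) : ∑ j, levelDown h i j + 1 = ∑ j, h j + k := by
  have hpt : ∀ j, levelDown h i j + (Pi.single i 1 : Fin k → ℕ) j = h j + 1 := by
    intro j; by_cases hj : j = i <;> simp [levelDown, hj, hi]
  simpa [sum_add_distrib, sum_pi_single'] using Fintype.sum_congr _ _ hpt

lemma sum_update_one (hi : h i = 0) : ∑ j, Function.update h i 1 j = ∑ j, h j + 1 := by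
  have hpt : ∀ j, Function.update h i 1 j = h j + (Pi.single i 1 : Fin k → ℕ) j := by
    intro j; by_cases hj : j = i <;> simp [hj, hi]
  simpa [sum_add_distrib, sum_pi_single'] using Fintype.sum_congr _ _ hpt

lemma sum_update_pred (hi : h i ≠ 0) :
    ∑ j, Function.update h i (h i - 1) j + 1 = ∑ j, h j := by
  have hpt : ∀ j, Function.update h i (h i - 1) j + (Pi.single i 1 : Fin k → ℕ) j = h j := by
    intro j; by_cases hj : j = i <;> simp [hj]; omega
  simpa [sum_add_distrib, sum_pi_single'] using Fintype.sum_congr _ _ hpt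

lemma sum_levelUp (hi : h i = 0) (hne : ∀ j, j ≠ i → h j ≠ 0) :
    ∑ j, levelUp h j + k = ∑ j, h j + 1 := by
  have hpt : ∀ j, levelUp h j + 1 = h j + (Pi.single i 1 : Fin k → ℕ) j := by
    intro j; by_cases hj : j = i <;> simp [levelUp, hj, hi]; have := hne j hj; omega
  simpa [sum_add_distrib, sum_pi_single'] using Fintype.sum_congr _ _ hpt

end Sums

def maxLen (h : Fin k → ℕ) : ℕ := univ.sup h

section MaxLen

variable {h : Fin k → ℕ} {i : Fin k}

lemma le_maxLen (h : Fin k → ℕ) (j : Fin k) : h j ≤ maxLen h := le_sup (mem_univ j)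

lemma exists_maxLen_eq (hh : h ≠ 0) : ∃ j, h j = maxLen h ∧ h j ≠ 0 := by
  obtain ⟨j₁, hj₁⟩ : ∃ j, h j ≠ 0 := by by_contra! h0; exact hh (funext h0)
  obtain ⟨j, -, hj⟩ := exists_mem_eq_sup univ ⟨j₁, mem_univ _⟩ h
  have hj : h j = maxLen h := hj.symm
  have := le_maxLen h j₁
  exact ⟨j, hj, by omega⟩

lemma maxLen_levelDown (hi : h i = 0) (hh : h ≠ 0) : maxLen (levelDown h i) = maxLen h + 1 := by
  obtain ⟨j, hj, hj0⟩ := exists_maxLen_eq hh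
  have hji : j ≠ i := by rintro rfl; exact hj0 hi
  refine le_antisymm (Finset.sup_le fun l _ => ?_) ?_
  · have := le_maxLen h l
    unfold levelDown; split_ifs <;> omega
  · calc maxLen h + 1 = levelDown h i j := by simp [levelDown, hji, hj]
      _ ≤ _ := le_maxLen _ j

lemma maxLen_update_one (hi : h i = 0) (hh : h ≠ 0) :
    maxLen (Function.update h i 1) = maxLen h := by
  obtain ⟨j, hj, hj0⟩ := exists_maxLen_eq hh
  have hji : j ≠ i := by rintro rfl; exact hj0 hi
  refine le_antisymm (Finset.sup_le fun l _ => ?_) ?_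
  · rcases eq_or_ne l i with rfl | hl
    · simp; omega
    · simpa [hl] using le_maxLen h l
  · calc maxLen h = Function.update h i 1 j := by simp [hji, hj]
      _ ≤ _ := le_maxLen _ j

lemma maxLen_update_pred_le : maxLen (Function.update h i (h i - 1)) ≤ maxLen h := by
  refine sup_mono_fun fun l _ => ?_
  rcases eq_or_ne l i with rfl | hl <;> simp [*]

lemma maxLen_levelUp (hh : h ≠ 0) : maxLen (levelUp h) + 1 = maxLen h := by
  obtain ⟨j, hj, hj0⟩ := exists_maxLen_eq hh
  have hle : maxLen (levelUp h) ≤ maxLen h - 1 :=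
    Finset.sup_le fun l _ => by have := le_maxLen h l; unfold levelUp; omega
  have hge : maxLen h - 1 ≤ maxLen (levelUp h) := by
    have : h j - 1 ≤ maxLen (levelUp h) := le_maxLen (levelUp h) j
    omega
  omega

end MaxLen

def lyapunov (h : Fin k → ℕ) : ℝ := k * maxLen h - ∑ j, (h j : ℝ)

section Lyapunov

variable {h : Fin k → ℕ} {i : Fin k}

lemma lyapunov_nonneg (h : Fin k → ℕ) : 0 ≤ lyapunov h := by
  have hle : ∑ j, h j ≤ k * maxLen h := by
    simpa using sum_le_card_nsmul univ h _ fun j _ => le_maxLen h j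
  unfold lyapunov
  rw [sub_nonneg]; exact_mod_cast hle

lemma lyapunov_levelDown (hi : h i = 0) (hh : h ≠ 0) :
    lyapunov (levelDown h i) = lyapunov h + 1 := by
  have hsum : ((∑ j, levelDown h i j : ℕ) : ℝ) + 1 = (∑ j, h j : ℕ) + k := by
    exact_mod_cast sum_levelDown hi
  push_cast at hsum
  simp only [lyapunov, maxLen_levelDown hi hh]; push_cast; linarith

lemma lyapunov_update_one (hi : h i = 0) (hh : h ≠ 0) :
    lyapunov (Function.update h i 1) = lyapunov h - 1 := by
  have hsum : ((∑ j, Function.update h i 1 j : ℕ) : ℝ) = (∑ j, h j : ℕ) + 1 := by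
    exact_mod_cast sum_update_one hi
  push_cast at hsum
  simp only [lyapunov, maxLen_update_one hi hh]; linarith

lemma lyapunov_update_pred_le (hi : h i ≠ 0) :
    lyapunov (Function.update h i (h i - 1)) ≤ lyapunov h + 1 := by
  have hsum : ((∑ j, Function.update h i (h i - 1) j : ℕ) : ℝ) + 1 = (∑ j, h j : ℕ) := by
    exact_mod_cast sum_update_pred hi
  have hmax : (maxLen (Function.update h i (h i - 1)) : ℝ) ≤ maxLen h := by
    exact_mod_cast maxLen_update_pred_le
  push_cast at hsum
  unfold lyapunov
  linarith [mul_le_mul_of_nonneg_left hmax (Nat.cast_nonneg k : (0 : ℝ) ≤ k)]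

lemma lyapunov_levelUp (hi : h i = 0) (hne : ∀ j, j ≠ i → h j ≠ 0) (hh : h ≠ 0) :
    lyapunov (levelUp h) = lyapunov h - 1 := by
  have hsum : ((∑ j, levelUp h j : ℕ) : ℝ) + k = (∑ j, h j : ℕ) + 1 := by
    exact_mod_cast sum_levelUp hi hne
  have hmax : (maxLen (levelUp h) : ℝ) + 1 = maxLen h := by exact_mod_cast maxLen_levelUp hh
  push_cast at hsum
  unfold lyapunov
  rw [← hmax]; linarith

end Lyapunov

section PointMass

variable {ι σ : Type*} [DecidableEq σ]

lemma hasSum_ite_eq_mul (b : σ) (c : ℝ) (W : σ → ℝ) :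
    HasSum (fun x => (if x = b then c else 0) * W x) (c * W b) := by
  convert hasSum_ite_eq b (c * W b) using 2 with x
  split_ifs with hx <;> simp [hx]

lemma hasSum_sum_ite_eq_mul (s : Finset ι) (t : ι → σ) (c : ι → ℝ) (W : σ → ℝ) :
    HasSum (fun x => (∑ i ∈ s, if x = t i then c i else 0) * W x) (∑ i ∈ s, c i * W (t i)) := by
  simp_rw [sum_mul]
  exact hasSum_sum fun i _ => hasSum_ite_eq_mul (t i) (c i) W

end PointMass

noncomputable def AstarMean (lam : ℝ) (μ : Fin k → ℝ) (z : ℝ) (W : (Fin k → ℕ) → ℝ)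
    (h : Fin k → ℕ) : ℝ :=
  z⁻¹ * ∑ i ∈ sZero k h, μ i * W (levelDown h i)
    + ((if 2 ≤ #(sZero k h) then
          ∑ i ∈ sZero k h, lam / #(sZero k h) * W (Function.update h i 1) else 0)
      + ∑ j ∈ (sZero k h)ᶜ, μ j * W (Function.update h j (h j - 1)))
    + z * if #(sZero k h) = 1 then lam * W (levelUp h) else 0

noncomputable def twistedMean (lam : ℝ) (μ : Fin k → ℝ) (V : (Fin k → ℕ) → ℝ) (h : Fin k → ℕ) : ℝ :=
  ∑ i ∈ sZero k h, rho k lam μ * μ i * V (levelDown h i)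
    + ((if 2 ≤ #(sZero k h) then ∑ i ∈ sZero k h,
          lam / #(sZero k h) / rho k lam μ * V (Function.update h i 1) else 0)
      + ∑ j ∈ (sZero k h)ᶜ, rho k lam μ * μ j * V (Function.update h j (h j - 1)))
    + if #(sZero k h) = 1 then lam / rho k lam μ * V (levelUp h) else 0

variable {lam : ℝ} {μ : Fin k → ℝ}

lemma hasSum_Astar_mul (z : ℝ) (W : (Fin k → ℕ) → ℝ) (h : Fin k → ℕ) :
    HasSum (fun h' => Astar k lam μ z h h' * W h') (AstarMean lam μ z W h) := by
  have hminus : HasSum (fun h' => Aminus k μ h h' * W h')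
      (∑ i ∈ sZero k h, μ i * W (levelDown h i)) :=
    hasSum_sum_ite_eq_mul (sZero k h) (levelDown h) μ W
  have harrive : HasSum (fun h' => (if 2 ≤ #(sZero k h) then ∑ i ∈ sZero k h,
        (if h' = Function.update h i 1 then lam / #(sZero k h) else 0) else 0) * W h')
      (if 2 ≤ #(sZero k h) then
        ∑ i ∈ sZero k h, lam / #(sZero k h) * W (Function.update h i 1) else 0) := by
    split_ifs
    · exact hasSum_sum_ite_eq_mul _ _ (fun _ => lam / #(sZero k h)) W
    · simp
  have hdepart :=
    hasSum_sum_ite_eq_mul (sZero k h)ᶜ (fun j => Function.update h j (h j - 1)) μ W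
  have hplus : HasSum (fun h' => Aplus k lam h h' * W h')
      (if #(sZero k h) = 1 then lam * W (levelUp h) else 0) := by
    by_cases h1 : #(sZero k h) = 1
    · have hA : ∀ h', Aplus k lam h h' = if h' = levelUp h then lam else 0 := fun h' => by
        simp only [Aplus, h1, true_and]; rfl
      simpa only [hA, h1, if_true] using hasSum_ite_eq_mul (levelUp h) lam W
    · simp [Aplus, h1]
  unfold AstarMean
  convert ((hminus.mul_left z⁻¹).add (harrive.add hdepart)).add (hplus.mul_left z) using 1
  · rfl
  funext h'
  simp only [Astar, Azero]
  ring

lemma pow_mul_inv_pow_of_add_eq {ρ : ℝ} (hρ : ρ ≠ 0) {a b c d : ℕ} (h : a + d = b + c) :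
    ρ ^ a * (ρ ^ b)⁻¹ = ρ ^ c * (ρ ^ d)⁻¹ := by
  field_simp
  rw [← pow_add, ← pow_add, h, add_comm]

section Twist

variable {ρ : ℝ} (hρ : ρ ≠ 0) {h : Fin k → ℕ} {i : Fin k}
include hρ

lemma twist_levelDown (hi : h i = 0) :
    ρ ^ (∑ j, h j) * ρ ^ k * (ρ ^ (∑ j, levelDown h i j))⁻¹ = ρ := by
  rw [← pow_add,
    pow_mul_inv_pow_of_add_eq hρ (c := 1) (d := 0) (by have := sum_levelDown hi; omega)]
  simp

lemma twist_update_one (hi : h i = 0) :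
    ρ ^ (∑ j, h j) * (ρ ^ (∑ j, Function.update h i 1 j))⁻¹ = ρ⁻¹ := by
  rw [pow_mul_inv_pow_of_add_eq hρ (c := 0) (d := 1) (by have := sum_update_one hi; omega)]
  simp

lemma twist_update_pred (hi : h i ≠ 0) :
    ρ ^ (∑ j, h j) * (ρ ^ (∑ j, Function.update h i (h i - 1) j))⁻¹ = ρ := by
  rw [pow_mul_inv_pow_of_add_eq hρ (c := 1) (d := 0) (by have := sum_update_pred hi; omega)]
  simp

lemma twist_levelUp (hi : h i = 0) (hne : ∀ j, j ≠ i → h j ≠ 0) :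
    ρ ^ (∑ j, h j) * (ρ ^ k)⁻¹ * (ρ ^ (∑ j, levelUp h j))⁻¹ = ρ⁻¹ := by
  rw [mul_assoc, ← mul_inv, ← pow_add,
    pow_mul_inv_pow_of_add_eq hρ (c := 0) (d := 1) (by have := sum_levelUp hi hne; omega)]
  simp

end Twist

lemma pow_mul_AstarMean (hρ : rho k lam μ ≠ 0) (V : (Fin k → ℕ) → ℝ) (h : Fin k → ℕ) :
    rho k lam μ ^ (∑ j, h j) * AstarMean lam μ (rho k lam μ ^ k)⁻¹
      (fun h' => (rho k lam μ ^ ∑ j, h' j)⁻¹ * V h') h = twistedMean lam μ V h := by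
  set ρ := rho k lam μ
  have e1 : ρ ^ (∑ j, h j) * (ρ ^ k * ∑ i ∈ sZero k h,
        μ i * ((ρ ^ ∑ j, levelDown h i j)⁻¹ * V (levelDown h i))) =
      ∑ i ∈ sZero k h, ρ * μ i * V (levelDown h i) := by
    rw [mul_sum, mul_sum]
    refine sum_congr rfl fun i hi => ?_
    linear_combination (μ i * V (levelDown h i)) * twist_levelDown hρ (mem_sZero.1 hi)
  have e2 : ρ ^ (∑ j, h j) * (if 2 ≤ #(sZero k h) then ∑ i ∈ sZero k h, lam / #(sZero k h) *
        ((ρ ^ ∑ j, Function.update h i 1 j)⁻¹ * V (Function.update h i 1)) else 0) =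
      if 2 ≤ #(sZero k h) then ∑ i ∈ sZero k h,
        lam / #(sZero k h) / ρ * V (Function.update h i 1) else 0 := by
    split_ifs
    · rw [mul_sum]
      refine sum_congr rfl fun i hi => ?_
      linear_combination (lam / #(sZero k h) * V (Function.update h i 1)) *
        twist_update_one hρ (mem_sZero.1 hi)
    · simp
  have e3 : ρ ^ (∑ j, h j) * ∑ j ∈ (sZero k h)ᶜ, μ j *
        ((ρ ^ ∑ l, Function.update h j (h j - 1) l)⁻¹ * V (Function.update h j (h j - 1))) =
      ∑ j ∈ (sZero k h)ᶜ, ρ * μ j * V (Function.update h j (h j - 1)) := by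
    rw [mul_sum]
    refine sum_congr rfl fun j hj => ?_
    linear_combination (μ j * V (Function.update h j (h j - 1))) *
      twist_update_pred hρ fun h0 => mem_compl.1 hj (mem_sZero.2 h0)
  have e4 : ρ ^ (∑ j, h j) * ((ρ ^ k)⁻¹ * if #(sZero k h) = 1 then
        lam * ((ρ ^ ∑ j, levelUp h j)⁻¹ * V (levelUp h)) else 0) =
      if #(sZero k h) = 1 then lam / ρ * V (levelUp h) else 0 := by
    split_ifs with h1
    · obtain ⟨i, hi, hne⟩ := exists_of_card_sZero_eq_one h1
      linear_combination (lam * V (levelUp h)) * twist_levelUp hρ hi hne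
    · simp
  rw [AstarMean, twistedMean, inv_inv, ← e1, ← e2, ← e3, ← e4]
  ring

lemma hasSum_pMat_mul (hρ : rho k lam μ ≠ 0) (V : (Fin k → ℕ) → ℝ) (h : Fin k → ℕ) :
    HasSum (fun h' => pMat k lam μ h h' * V h') (twistedMean lam μ V h) := by
  rw [← pow_mul_AstarMean hρ]
  convert (hasSum_Astar_mul _ _ h).mul_left _ using 1
  · rfl
  · funext h'; simp only [pMat]; ring

lemma rho_mul_sum (hsum : ∑ i, μ i ≠ 0) : rho k lam μ * ∑ i, μ i = lam :=
  div_mul_cancel₀ _ hsum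

lemma lam_div_rho (hlam : lam ≠ 0) : lam / rho k lam μ = ∑ i, μ i :=
  div_div_cancel₀ hlam

lemma twistedMean_eq_of_arrival {V : (Fin k → ℕ) → ℝ} {h : Fin k → ℕ}
    (hS : (sZero k h).Nonempty) {c : ℝ}
    (harr : 2 ≤ #(sZero k h) → ∀ i ∈ sZero k h, V (Function.update h i 1) = c)
    (hup : #(sZero k h) = 1 → V (levelUp h) = c) :
    twistedMean lam μ V h = ∑ i ∈ sZero k h, rho k lam μ * μ i * V (levelDown h i)
      + ∑ j ∈ (sZero k h)ᶜ, rho k lam μ * μ j * V (Function.update h j (h j - 1))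
      + lam / rho k lam μ * c := by
  have hcard : 0 < #(sZero k h) := hS.card_pos
  unfold twistedMean
  by_cases h1 : #(sZero k h) = 1
  · rw [if_neg (by omega), if_pos h1, hup h1]
    ring
  · have harrival : ∑ i ∈ sZero k h, lam / #(sZero k h) / rho k lam μ * V (Function.update h i 1)
        = lam / rho k lam μ * c := by
      rw [sum_congr rfl fun i hi => by rw [harr (by omega) i hi], sum_const, nsmul_eq_mul]
      field_simp
    rw [if_pos (by omega), if_neg h1, harrival]
    ring

lemma hasSum_pMat_one (hlam : lam ≠ 0) (hsum : ∑ i, μ i ≠ 0) (hnorm : lam + ∑ i, μ i = 1)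
    {h : Fin k → ℕ} (hH : ∃ i, h i = 0) : HasSum (pMat k lam μ h) 1 := by
  obtain ⟨i, hi⟩ := hH
  have H := hasSum_pMat_mul (div_ne_zero hlam hsum) (fun _ => 1) h
  rw [twistedMean_eq_of_arrival (c := 1) ⟨i, mem_sZero.2 hi⟩ (fun _ _ _ => rfl) fun _ => rfl] at H
  simp only [mul_one, ← mul_sum] at H
  rwa [← mul_add, sum_add_sum_compl, rho_mul_sum hsum, lam_div_rho hlam, hnorm] at H

lemma pMat_nonneg (hlam : 0 ≤ lam) (hμ : ∀ i, 0 ≤ μ i) (h h' : Fin k → ℕ) :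
    0 ≤ pMat k lam μ h h' := by
  have hρ : 0 ≤ rho k lam μ := div_nonneg hlam (sum_nonneg fun i _ => hμ i)
  have hite : ∀ {p : Prop} [Decidable p] {a : ℝ}, 0 ≤ a → 0 ≤ if p then a else 0 :=
    fun ha => by split_ifs <;> simp [ha]
  have hA : 0 ≤ Astar k lam μ (rho k lam μ ^ k)⁻¹ h h' := by
    unfold Astar Aminus Azero Aplus
    refine add_nonneg (add_nonneg ?_ (add_nonneg ?_ ?_)) ?_
    · exact mul_nonneg (by positivity) (sum_nonneg fun i _ => hite (hμ i))
    · exact hite (sum_nonneg fun i _ => hite (by positivity))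
    · exact sum_nonneg fun j _ => hite (hμ j)
    · exact mul_nonneg (by positivity) (hite hlam)
  unfold pMat
  positivity

lemma exists_eq_zero_of_pMat_ne_zero (hlam : 0 ≤ lam) (hμ : ∀ i, 0 ≤ μ i)
    (hρ : rho k lam μ ≠ 0) {h h' : Fin k → ℕ} (hH : ∃ i, h i = 0) (hP : pMat k lam μ h h' ≠ 0) :
    ∃ i, h' i = 0 := by
  classical
  obtain ⟨i₀, hi₀⟩ := hH
  set V : (Fin k → ℕ) → ℝ := fun x => if ∃ i, x i = 0 then 0 else 1
  have hV : ∀ x, (∃ i, x i = 0) → V x = 0 := fun x hx => if_pos hx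
  -- Every move out of `h ∈ H` lands in `H`, so the indicator `V` of the complement has mean `0`.
  have hmean : twistedMean lam μ V h = 0 := by
    rw [twistedMean_eq_of_arrival (c := 0) ⟨i₀, mem_sZero.2 hi₀⟩]
    · rw [sum_eq_zero fun i _ => by rw [hV _ ⟨i, by simp [levelDown]⟩, mul_zero],
        sum_eq_zero fun j hj => ?_]
      · ring
      have hj : j ≠ i₀ := by rintro rfl; exact mem_compl.1 hj (mem_sZero.2 hi₀)
      rw [hV _ ⟨i₀, by simp [Function.update_of_ne hj.symm, hi₀]⟩, mul_zero]
    · intro h2 i _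
      obtain ⟨j, hj, hji⟩ := exists_mem_ne h2 i
      exact hV _ ⟨j, by simp [Function.update_of_ne hji, mem_sZero.1 hj]⟩
    · exact fun _ => hV _ ⟨i₀, by simp [levelUp, hi₀]⟩
  have hzero := (hasSum_zero_iff_of_nonneg fun x => mul_nonneg (pMat_nonneg hlam hμ h x)
    (by simp only [V]; split_ifs <;> norm_num)).1 (hmean ▸ hasSum_pMat_mul hρ V h)
  by_contra hh'
  simpa [V, hh', hP] using congrFun hzero h'

lemma twistedMean_lyapunov_le (hlam : 0 < lam) (hμ : ∀ i, 0 ≤ μ i) (hsum : 0 < ∑ i, μ i)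
    (hnorm : lam + ∑ i, μ i = 1) {h : Fin k → ℕ} (hH : ∃ i, h i = 0) (hh : h ≠ 0) :
    twistedMean lam μ lyapunov h ≤ lyapunov h - (∑ i, μ i - lam) := by
  obtain ⟨i₀, hi₀⟩ := hH
  set ρ := rho k lam μ
  have hρ : 0 ≤ ρ := (div_pos hlam hsum).le
  have hup : #(sZero k h) = 1 → lyapunov (levelUp h) = lyapunov h - 1 := fun h1 => by
    obtain ⟨i, hi, hne⟩ := exists_of_card_sZero_eq_one h1
    exact lyapunov_levelUp hi hne hh
  rw [twistedMean_eq_of_arrival ⟨i₀, mem_sZero.2 hi₀⟩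
    (fun _ i hi => lyapunov_update_one (mem_sZero.1 hi) hh) hup,
    sum_congr rfl fun i hi => by rw [lyapunov_levelDown (mem_sZero.1 hi) hh],
    lam_div_rho hlam.ne']
  have hdepart : ∑ j ∈ (sZero k h)ᶜ, ρ * μ j * lyapunov (Function.update h j (h j - 1)) ≤
      ∑ j ∈ (sZero k h)ᶜ, ρ * μ j * (lyapunov h + 1) :=
    sum_le_sum fun j hj => mul_le_mul_of_nonneg_left
      (lyapunov_update_pred_le fun h0 => mem_compl.1 hj (mem_sZero.2 h0))
      (mul_nonneg hρ (hμ j))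
  have htotal : ∑ i ∈ sZero k h, ρ * μ i * (lyapunov h + 1) +
      ∑ j ∈ (sZero k h)ᶜ, ρ * μ j * (lyapunov h + 1) = lam * (lyapunov h + 1) := by
    rw [← sum_mul, ← sum_mul, ← add_mul, sum_add_sum_compl, ← mul_sum, rho_mul_sum hsum.ne']
  linear_combination hdepart + htotal + (lyapunov h) * hnorm

end JSQ

/-- **Positive recurrence of the twisted chain:** `Δ_y⁻¹ A_*(ρ^{−k}) Δ_y` is a stochastic
matrix on `H`, and the Markov chain it generates is positive recurrent; in particular it
admits a stationary probability distribution `ν` on `H`. -/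
theorem twisted_chain_positive_recurrent
    (k : ℕ) (hk : 2 ≤ k) (lam : ℝ) (μ : Fin k → ℝ)
    (hlam : 0 < lam) (hμ : ∀ i, 0 < μ i)
    (hnorm : lam + ∑ i, μ i = 1)
    (hρ : rho k lam μ < 1)
    :
    (∀ h : Fin k → ℕ, (∃ i, h i = 0) →
      (∀ h', 0 ≤ pMat k lam μ h h') ∧ HasSum (pMat k lam μ h) 1) ∧
    (∃ ν : (Fin k → ℕ) → ℝ,
      (∀ h, 0 ≤ ν h) ∧
      (∀ h, ν h ≠ 0 → ∃ i, h i = 0) ∧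
      HasSum ν 1 ∧
      (∀ h' : Fin k → ℕ, (∑' h : Fin k → ℕ, ν h * pMat k lam μ h h') = ν h')) := by
  have hμ0 : ∀ i, 0 ≤ μ i := fun i => (hμ i).le
  have hsum : 0 < ∑ i, μ i := Finset.sum_pos (fun i _ => hμ i) ⟨⟨0, by omega⟩, Finset.mem_univ _⟩
  have hρ0 : rho k lam μ ≠ 0 := (div_pos hlam hsum).ne'
  have hε : 0 < ∑ i, μ i - lam := sub_pos.2 ((div_lt_one hsum).1 hρ)
  have hrow : ∀ h : Fin k → ℕ, (∃ i, h i = 0) → HasSum (pMat k lam μ h) 1 :=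
    fun h hH => hasSum_pMat_one hlam.ne' hsum.ne' hnorm hH
  refine ⟨fun h hH => ⟨pMat_nonneg hlam.le hμ0 h, hrow h hH⟩, ?_⟩
  exact exists_stationary_of_drift (S := {h : Fin k → ℕ | ∃ i, h i = 0}) (o := 0)
    (pMat_nonneg hlam.le hμ0) lyapunov_nonneg hε ⟨⟨0, by omega⟩, rfl⟩ hrow
    (fun h hH _ => exists_eq_zero_of_pMat_ne_zero hlam.le hμ0 hρ0 hH)
    (fun h _ => hasSum_pMat_mul hρ0 lyapunov h)
    (fun h hH hh => by linarith [twistedMean_lyapunov_le hlam hμ0 hsum hnorm hH hh])
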